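/- arXiv:2507.01268 — 3 statements merged into one kernel-verified Lean document; each statement's English description precedes it below -/
import Mathlib

section
/- Let H be a split, locally compact subgroup of G = T ⋊ O(n) = Isom(𝔼ⁿ). Then the inclusion of the translation part T_H = T ∩ H into T ≅ ℝⁿ is a quasi-isometric embedding (with respect to any word metric coming from a compact generating set of T_H and the Euclidean metric on T). -/
noncomputable section

/-- Euclidean `n`-space. -/
abbrev En (n : ℕ) : Type := EuclideanSpace ℝ (Fin n)

/-- The orthogonal group of Euclidean `n`-space, realized as linear isometries. -/
abbrev OrthGrp (n : ℕ) : Type := En n ≃ₗᵢ[ℝ] En n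

/-- The action of the orthogonal group on the (multiplicatively written) translation group. -/
def rotAction (n : ℕ) : OrthGrp n →* MulAut (Multiplicative (En n)) where
  toFun A := AddEquiv.toMultiplicative A.toLinearEquiv.toAddEquiv
  map_one' := by ext x; rfl
  map_mul' A B := by ext x; rfl

/-- The isometry group `Isom(𝔼ⁿ) = T ⋊ O(n)`. -/
abbrev IsomE (n : ℕ) : Type :=
  SemidirectProduct (Multiplicative (En n)) (OrthGrp n) (rotAction n)

instance (n : ℕ) : TopologicalSpace (OrthGrp n) :=
  TopologicalSpace.induced (fun A => (A : En n → En n)) inferInstance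

instance (n : ℕ) : TopologicalSpace (IsomE n) :=
  TopologicalSpace.induced (fun g => (g.left, g.right)) inferInstance

/-- The translation subgroup `T` of `Isom(𝔼ⁿ)`. -/
def transSubgroup (n : ℕ) : Subgroup (IsomE n) := SemidirectProduct.inl.range

/-- The orthogonal subgroup `O(n)` of `Isom(𝔼ⁿ)`. -/
def sphSubgroup (n : ℕ) : Subgroup (IsomE n) := SemidirectProduct.inr.range

/-- A subgroup `H` of `Isom(𝔼ⁿ)` *splits* if `H = T_H ⋊ H₀`:
the translation part and the spherical part of every element of `H` lie in `H`. -/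
def Splits {n : ℕ} (H : Subgroup (IsomE n)) : Prop :=
  ∀ h ∈ H, SemidirectProduct.inl h.left ∈ H ∧ SemidirectProduct.inr h.right ∈ H

/-- The translation vector of an isometry. -/
def tPart {n : ℕ} (g : IsomE n) : En n := Multiplicative.toAdd g.left

/-- The lattice `L_H = {λ : t^λ ∈ T_H}` of translation vectors of `H`. -/
def latticeLH {n : ℕ} (H : Subgroup (IsomE n)) : Set (En n) :=
  {v | SemidirectProduct.inl (Multiplicative.ofAdd v) ∈ H}

/-- Word length with respect to a generating set `S` (symmetrized). -/
def wordLength {G : Type*} [Group G] (S : Set G) (g : G) : ℕ :=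
  sInf {k | ∃ l : List G, (∀ x ∈ l, x ∈ S ∨ x⁻¹ ∈ S) ∧ l.prod = g ∧ l.length = k}

/-- The conjugator length of a pair of elements. -/
def conjLength {G : Type*} [Group G] (S : Set G) (h h' : G) : ℕ :=
  sInf {m | ∃ k : G, k * h * k⁻¹ = h' ∧ wordLength S k = m}

/-- The conjugator length function. -/
def CLF {G : Type*} [Group G] (S : Set G) (m : ℕ) : ℕ :=
  sSup {l | ∃ h h' : G, IsConj h h' ∧ wordLength S h + wordLength S h' ≤ m ∧
    conjLength S h h' = l}

/-- `g` quasi-dominates `f` via an increasing affine function. -/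
def QuasiDom (f g : ℕ → ℕ) : Prop :=
  ∃ C D : ℕ, 0 < C ∧ ∀ m, f m ≤ C * g (C * m + D) + D

/-!
Write `ν : T_H → ℝⁿ` for the translation vector; it is a homomorphism and a topological embedding.
The bound `‖ν g‖ ≤ M |g|` holds because `ν` is bounded on the compact set `S`. Conversely, `T_H`
is locally compact, so Baire's theorem applied to the compact sets `(S ∪ S⁻¹) ^ m` gives a
neighbourhood of `1` of bounded word length; since balls of `ℝⁿ` are totally bounded, word length
is then bounded on every set `{‖ν g‖ ≤ R}`. Finally pick `a₁, …, a_k ∈ T_H` whose vectors `ν aᵢ`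
form a basis of the span of `ν(T_H)`: every `ν g` is an integer combination `∑ kᵢ ν aᵢ` with
`|kᵢ| = O(‖ν g‖)` plus a vector of norm at most `∑ ‖ν aᵢ‖`, so `|g| = O(‖ν g‖ + 1)`.
-/

open Multiplicative Set Topology Filter Pointwise

theorem IsCompact.pow {M : Type*} [Monoid M] [TopologicalSpace M] [ContinuousMul M] {T : Set M}
    (hT : IsCompact T) (m : ℕ) : IsCompact (T ^ m) := by
  induction m with
  | zero => exact isCompact_singleton
  | succ m ih => rw [pow_succ]; exact ih.mul hT

theorem LinearIndependent.exists_int_combination_near {E : Type*} [NormedAddCommGroup E]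
    [NormedSpace ℝ E] {κ : Type*} [Fintype κ] {e : κ → E} (he : LinearIndependent ℝ e) :
    ∃ A : ℝ, ∀ x ∈ Submodule.span ℝ (range e), ∃ k : κ → ℤ,
      ‖x - ∑ i, k i • e i‖ ≤ ∑ i, ‖e i‖ ∧ ∀ i, |(k i : ℝ)| ≤ A * ‖x‖ + 1 := by
  set b := Module.Basis.span he
  refine ⟨‖b.equivFunL.toContinuousLinearMap‖, fun x hx => ?_⟩
  set c := b.equivFunL ⟨x, hx⟩
  have hx_eq : x = ∑ i, c i • e i := by
    have := congrArg Subtype.val (b.sum_equivFun ⟨x, hx⟩)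
    simpa [b, c, Module.Basis.span_apply] using this.symm
  refine ⟨fun i => ⌊c i⌋, ?_, fun i => ?_⟩
  · calc ‖x - ∑ i, (⌊c i⌋ : ℤ) • e i‖ = ‖∑ i, Int.fract (c i) • e i‖ := by
          rw [hx_eq, ← Finset.sum_sub_distrib]
          congr 1; refine Finset.sum_congr rfl fun i _ => ?_
          rw [← Int.self_sub_floor, sub_smul, Int.cast_smul_eq_zsmul]
      _ ≤ ∑ i, ‖e i‖ := by
          refine (norm_sum_le _ _).trans (Finset.sum_le_sum fun i _ => ?_)
          rw [norm_smul, Real.norm_of_nonneg (Int.fract_nonneg _)]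
          exact mul_le_of_le_one_left (norm_nonneg _) (Int.fract_lt_one _).le
  · have hc : |c i| ≤ ‖b.equivFunL.toContinuousLinearMap‖ * ‖x‖ :=
      (norm_le_pi_norm c i).trans (b.equivFunL.toContinuousLinearMap.le_opNorm ⟨x, hx⟩)
    have h₁ := Int.floor_le (c i)
    have h₂ := Int.sub_one_lt_floor (c i)
    rw [abs_le] at hc ⊢
    constructor <;> linarith [hc.1, hc.2]

section WordLength

variable {G : Type*} [Group G] {S : Set G}

theorem wordLength_list_prod_le_length {l : List G} (hl : ∀ x ∈ l, x ∈ S ∨ x⁻¹ ∈ S) :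
    wordLength S l.prod ≤ l.length :=
  Nat.sInf_le ⟨l, hl, rfl, rfl⟩

theorem exists_shortest_word (hS : Subgroup.closure S = ⊤) (g : G) :
    ∃ l : List G, (∀ x ∈ l, x ∈ S ∨ x⁻¹ ∈ S) ∧ l.prod = g ∧ l.length = wordLength S g := by
  have hg : g ∈ Submonoid.closure (S ∪ S⁻¹) := by
    rw [← Subgroup.closure_toSubmonoid, hS]; trivial
  obtain ⟨l, hl, rfl⟩ := Submonoid.exists_list_of_mem_closure hg
  exact Nat.sInf_mem (s := {k | ∃ l' : List G, (∀ x ∈ l', x ∈ S ∨ x⁻¹ ∈ S) ∧ l'.prod = l.prod ∧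
    l'.length = k}) ⟨l.length, l, hl, rfl, rfl⟩

theorem wordLength_one : wordLength S (1 : G) = 0 :=
  Nat.eq_zero_of_le_zero (wordLength_list_prod_le_length (l := []) (by simp))

theorem wordLength_mul_le (hS : Subgroup.closure S = ⊤) (g h : G) :
    wordLength S (g * h) ≤ wordLength S g + wordLength S h := by
  obtain ⟨l, hl, rfl, hlen⟩ := exists_shortest_word hS g
  obtain ⟨l', hl', rfl, hlen'⟩ := exists_shortest_word hS h
  rw [← hlen, ← hlen', ← List.length_append, ← List.prod_append]
  exact wordLength_list_prod_le_length (List.forall_mem_append.2 ⟨hl, hl'⟩)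

theorem wordLength_inv_le (hS : Subgroup.closure S = ⊤) (g : G) :
    wordLength S g⁻¹ ≤ wordLength S g := by
  obtain ⟨l, hl, rfl, hlen⟩ := exists_shortest_word hS g
  rw [← hlen, List.prod_inv_reverse, ← List.length_map (fun x => x⁻¹), ← List.length_reverse]
  refine wordLength_list_prod_le_length fun x hx => ?_
  obtain ⟨y, hy, rfl⟩ := List.mem_map.1 (List.mem_reverse.1 hx)
  simpa only [inv_inv] using (hl y hy).symm

theorem wordLength_inv (hS : Subgroup.closure S = ⊤) (g : G) :
    wordLength S g⁻¹ = wordLength S g :=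
  (wordLength_inv_le hS g).antisymm (by simpa using wordLength_inv_le hS g⁻¹)

theorem wordLength_pow_le (hS : Subgroup.closure S = ⊤) (g : G) (m : ℕ) :
    wordLength S (g ^ m) ≤ m * wordLength S g := by
  induction m with
  | zero => simp [wordLength_one]
  | succ m ih =>
    rw [pow_succ, Nat.succ_mul]
    exact (wordLength_mul_le hS _ _).trans (Nat.add_le_add_right ih _)

theorem wordLength_zpow_le (hS : Subgroup.closure S = ⊤) (g : G) (k : ℤ) :
    wordLength S (g ^ k) ≤ k.natAbs * wordLength S g := by
  obtain ⟨m, rfl | rfl⟩ := Int.eq_nat_or_neg k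
  · simpa using wordLength_pow_le hS g m
  · simpa [wordLength_inv hS] using wordLength_pow_le hS g m

theorem wordLength_list_prod_le (hS : Subgroup.closure S = ⊤) (l : List G) :
    wordLength S l.prod ≤ (l.map (wordLength S)).sum := by
  induction l with
  | nil => simp [wordLength_one]
  | cons a l ih =>
    rw [List.prod_cons, List.map_cons, List.sum_cons]
    exact (wordLength_mul_le hS _ _).trans (Nat.add_le_add_left ih _)

theorem wordLength_le_of_mem_pow {m : ℕ} {x : G} (hx : x ∈ (S ∪ S⁻¹) ^ m) :
    wordLength S x ≤ m := by
  obtain ⟨f, rfl⟩ := Set.mem_pow.1 hx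
  refine (wordLength_list_prod_le_length fun y hy => ?_).trans (List.length_ofFn).le
  obtain ⟨i, rfl⟩ := List.mem_ofFn.1 hy
  exact (f i).2

theorem iUnion_union_inv_pow_eq_univ (hS : Subgroup.closure S = ⊤) :
    ⋃ m, (S ∪ S⁻¹) ^ m = univ := by
  refine eq_univ_of_forall fun g => mem_iUnion.2 ?_
  obtain ⟨l, hl, rfl, -⟩ := exists_shortest_word hS g
  refine ⟨l.length, Set.mem_pow.2 ⟨fun i => ⟨l.get i, hl _ (List.get_mem l i)⟩, ?_⟩⟩
  exact congrArg List.prod (List.ofFn_get l)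

theorem exists_toAdd_eq_sum_zsmul_wordLength_le {E : Type*} [AddCommGroup E]
    (φ : G →* Multiplicative E) (hS : Subgroup.closure S = ⊤) {κ : Type*} [Fintype κ]
    (a : κ → G) (k : κ → ℤ) :
    ∃ w : G, toAdd (φ w) = ∑ i, k i • toAdd (φ (a i)) ∧
      wordLength S w ≤ ∑ i, (k i).natAbs * wordLength S (a i) := by
  refine ⟨(Finset.univ.toList.map fun i => a i ^ k i).prod, ?_, ?_⟩
  · rw [map_list_prod, List.map_map, Finset.prod_map_toList, toAdd_prod]
    simp [toAdd_zpow]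
  · refine (wordLength_list_prod_le hS _).trans ?_
    rw [List.map_map, Finset.sum_map_toList]
    exact Finset.sum_le_sum fun i _ => wordLength_zpow_le hS _ _

theorem exists_wordLength_le_mem_nhds_one [TopologicalSpace G] [IsTopologicalGroup G] [T2Space G]
    [BaireSpace G] (hSc : IsCompact S) (hS : Subgroup.closure S = ⊤) :
    ∃ N, {g | wordLength S g ≤ N} ∈ 𝓝 (1 : G) := by
  have hclosed (m : ℕ) : IsClosed ((S ∪ S⁻¹) ^ m) := ((hSc.union hSc.inv).pow m).isClosed
  obtain ⟨m, x, hx⟩ :=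
    nonempty_interior_of_iUnion_of_closed hclosed (iUnion_union_inv_pow_eq_univ hS)
  have hxm : wordLength S x ≤ m := wordLength_le_of_mem_pow (interior_subset hx)
  have hnhds : (x * ·) ⁻¹' ((S ∪ S⁻¹) ^ m) ∈ 𝓝 (1 : G) :=
    (continuous_const_mul x).continuousAt.preimage_mem_nhds
      (by simpa using mem_interior_iff_mem_nhds.1 hx)
  refine ⟨m + m, mem_of_superset hnhds fun g hg => ?_⟩
  calc wordLength S g = wordLength S (x⁻¹ * (x * g)) := by group
    _ ≤ wordLength S x + wordLength S (x * g) := by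
        simpa [wordLength_inv hS] using wordLength_mul_le hS x⁻¹ (x * g)
    _ ≤ m + m := add_le_add hxm (wordLength_le_of_mem_pow hg)

section NormBounds

variable {E : Type*} [SeminormedAddCommGroup E]

theorem norm_le_mul_wordLength (φ : G →* Multiplicative E) (hS : Subgroup.closure S = ⊤)
    {M : ℝ} (hM : ∀ s ∈ S, ‖φ s‖ ≤ M) (g : G) : ‖φ g‖ ≤ M * wordLength S g := by
  obtain ⟨l, hl, rfl, hlen⟩ := exists_shortest_word hS g
  rw [← hlen]
  clear hlen
  induction l with
  | nil => simp
  | cons a l ih =>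
    have ha : ‖φ a‖ ≤ M := by
      rcases hl a List.mem_cons_self with h | h
      · exact hM a h
      · simpa using hM _ h
    have := ih fun x hx => hl x (List.mem_cons_of_mem a hx)
    calc ‖φ (a :: l).prod‖ ≤ ‖φ a‖ + ‖φ l.prod‖ := by
          rw [List.prod_cons, map_mul]; exact norm_mul_le' _ _
      _ ≤ M * (a :: l).length := by push_cast [List.length_cons]; linarith

theorem exists_wordLength_le_of_norm_le [ProperSpace E] (φ : G →* Multiplicative E)
    (hS : Subgroup.closure S = ⊤) {ε : ℝ} (hε : 0 < ε) {N₀ : ℕ}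
    (hsmall : ∀ g, ‖φ g‖ < ε → wordLength S g ≤ N₀) (R : ℝ) :
    ∃ N : ℕ, ∀ g, ‖φ g‖ ≤ R → wordLength S g ≤ N := by
  obtain ⟨t, hts, htfin, hcover⟩ := Metric.finite_approx_of_totallyBounded
    ((isCompact_closedBall (0 : E) R).totallyBounded.subset inter_subset_right) ε hε
  have hpre : ∀ y ∈ t, ∃ g, toAdd (φ g) = y := fun y hy => (hts hy).1
  choose! c hc using hpre
  obtain ⟨N₁, hN₁⟩ := (htfin.image (fun y => wordLength S (c y))).bddAbove
  refine ⟨N₁ + N₀, fun g hg => ?_⟩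
  obtain ⟨y, hyt, hgy⟩ := mem_iUnion₂.1 (hcover ⟨mem_range_self g, by simpa using hg⟩)
  have hclose : ‖φ ((c y)⁻¹ * g)‖ < ε := by
    rw [Metric.mem_ball, dist_eq_norm, ← hc y hyt] at hgy
    rwa [map_mul, map_inv, ← norm_toAdd, toAdd_mul, toAdd_inv, neg_add_eq_sub]
  calc wordLength S g = wordLength S (c y * ((c y)⁻¹ * g)) := by group
    _ ≤ wordLength S (c y) + wordLength S ((c y)⁻¹ * g) := wordLength_mul_le hS _ _
    _ ≤ N₁ + N₀ := add_le_add (hN₁ (mem_image_of_mem _ hyt)) (hsmall _ hclose)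

end NormBounds

section LowerBound

variable {E : Type*} [NormedAddCommGroup E] [NormedSpace ℝ E]

theorem exists_wordLength_le_mul_norm_add [FiniteDimensional ℝ E] (φ : G →* Multiplicative E)
    (hS : Subgroup.closure S = ⊤)
    (hball : ∀ R : ℝ, ∃ N : ℕ, ∀ g, ‖φ g‖ ≤ R → wordLength S g ≤ N) :
    ∃ C D : ℝ, ∀ g, (wordLength S g : ℝ) ≤ C * ‖φ g‖ + D := by
  obtain ⟨κ, a, -, hspan, hli⟩ := exists_linearIndependent' ℝ fun g => toAdd (φ g)
  have := hli.finite
  have := Fintype.ofFinite κ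
  obtain ⟨A, hA⟩ := hli.exists_int_combination_near
  obtain ⟨N, hN⟩ := hball (∑ i, ‖φ (a i)‖)
  refine ⟨A * ∑ i, (wordLength S (a i) : ℝ), N + ∑ i, (wordLength S (a i) : ℝ), fun g => ?_⟩
  obtain ⟨k, hnear, hk⟩ := hA (toAdd (φ g)) (hspan ▸ Submodule.subset_span (mem_range_self g))
  obtain ⟨w, hw, hwl⟩ := exists_toAdd_eq_sum_zsmul_wordLength_le φ hS a k
  have hrest : wordLength S (g * w⁻¹) ≤ N :=
    hN _ (by simpa [← norm_toAdd, hw, ← sub_eq_add_neg] using hnear)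
  calc (wordLength S g : ℝ) = wordLength S (g * w⁻¹ * w) := by group
    _ ≤ N + ∑ i, ((k i).natAbs : ℝ) * wordLength S (a i) := by
        exact_mod_cast (wordLength_mul_le hS _ _).trans (add_le_add hrest hwl)
    _ ≤ N + ∑ i, (A * ‖φ g‖ + 1) * wordLength S (a i) := by
        gcongr with i
        simpa [Nat.cast_natAbs] using hk i
    _ = (A * ∑ i, (wordLength S (a i) : ℝ)) * ‖φ g‖ + (N + ∑ i, (wordLength S (a i) : ℝ)) := by
        simp only [add_mul, one_mul, Finset.sum_add_distrib, Finset.mul_sum, Finset.sum_mul]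
        ring_nf

end LowerBound

end WordLength

theorem Topology.IsInducing.exists_wordLength_norm_bounds {G E : Type*} [Group G]
    [TopologicalSpace G] [IsTopologicalGroup G] [T2Space G] [BaireSpace G]
    [NormedAddCommGroup E] [NormedSpace ℝ E] [FiniteDimensional ℝ E]
    {φ : G →* Multiplicative E} (hφ : IsInducing φ) {S : Set G} (hSc : IsCompact S)
    (hS : Subgroup.closure S = ⊤) :
    ∃ C D : ℝ, 1 ≤ C ∧ 0 ≤ D ∧ ∀ g,
      1 / C * wordLength S g - D ≤ ‖φ g‖ ∧ ‖φ g‖ ≤ C * wordLength S g + D := by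
  obtain ⟨M, hM⟩ := hSc.exists_bound_of_continuousOn' hφ.continuous.continuousOn
  obtain ⟨N₀, hN₀⟩ := exists_wordLength_le_mem_nhds_one hSc hS
  rw [hφ.nhds_eq_comap, map_one] at hN₀
  obtain ⟨t, ht, hts⟩ := mem_comap.1 hN₀
  obtain ⟨ε, hε, hεt⟩ := Metric.mem_nhds_iff.1 ht
  obtain ⟨C₁, D₁, hlow⟩ := exists_wordLength_le_mul_norm_add φ hS
    (exists_wordLength_le_of_norm_le φ hS hε fun g hg => hts (hεt (mem_ball_one_iff.2 hg)))
  set C := max 1 (max M C₁)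
  set D := max 0 D₁
  have hC : 1 ≤ C := le_max_left _ _
  refine ⟨C, D, hC, le_max_left _ _, fun g => ⟨?_, ?_⟩⟩
  · have hMC : C₁ * ‖φ g‖ ≤ C * ‖φ g‖ :=
      mul_le_mul_of_nonneg_right ((le_max_right _ _).trans (le_max_right _ _)) (norm_nonneg' _)
    have hD : D ≤ C * D := le_mul_of_one_le_left (le_max_left _ _) hC
    have := hlow g
    rw [one_div, sub_le_iff_le_add, inv_mul_le_iff₀ (by positivity)]
    linarith [le_max_right 0 D₁]
  · have hMC : M * wordLength S g ≤ C * wordLength S g :=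
      mul_le_mul_of_nonneg_right ((le_max_left _ _).trans (le_max_right _ _)) (Nat.cast_nonneg _)
    linarith [norm_le_mul_wordLength φ hS hM g, le_max_left 0 D₁]

section Isometries

variable {n : ℕ}

theorem right_eq_one_of_mem_transSubgroup {g : IsomE n} (hg : g ∈ transSubgroup n) :
    g.right = 1 := by
  obtain ⟨v, rfl⟩ := hg
  rfl

theorem isInducing_left_right : IsInducing fun g : IsomE n => (g.left, g.right) := ⟨rfl⟩

def translationHom (H : Subgroup (IsomE n)) : ↥(H ⊓ transSubgroup n) →* Multiplicative (En n) where
  toFun g := (g : IsomE n).left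
  map_one' := rfl
  map_mul' g h := by
    change (g : IsomE n).left * rotAction n (g : IsomE n).right (h : IsomE n).left = _
    rw [right_eq_one_of_mem_transSubgroup g.2.2, map_one]
    rfl

theorem isEmbedding_translationHom (H : Subgroup (IsomE n)) :
    IsEmbedding (translationHom H) := by
  have hpair :
      IsInducing fun g : ↥(H ⊓ transSubgroup n) => ((g : IsomE n).left, (g : IsomE n).right) :=
    isInducing_left_right.comp IsInducing.subtypeVal
  have hfac : (fun g : ↥(H ⊓ transSubgroup n) => ((g : IsomE n).left, (g : IsomE n).right)) =
      (·, 1) ∘ translationHom H :=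
    funext fun g => Prod.ext rfl (right_eq_one_of_mem_transSubgroup g.2.2)
  refine ⟨IsInducing.of_comp (continuous_fst.comp hpair.continuous) (by fun_prop) (hfac ▸ hpair),
    fun g h hgh => Subtype.ext (SemidirectProduct.ext hgh ?_)⟩
  rw [right_eq_one_of_mem_transSubgroup g.2.2, right_eq_one_of_mem_transSubgroup h.2.2]

theorem isClosed_transSubgroup : IsClosed (transSubgroup n : Set (IsomE n)) := by
  have hcont : Continuous fun g : IsomE n => ⇑g.right :=
    continuous_induced_dom.comp (continuous_snd.comp isInducing_left_right.continuous)
  convert (isClosed_singleton (x := ⇑(1 : OrthGrp n))).preimage hcont using 1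
  ext g
  simp only [SetLike.mem_coe, transSubgroup, SemidirectProduct.range_inl_eq_ker_rightHom,
    MonoidHom.mem_ker, SemidirectProduct.rightHom_eq_right, mem_preimage, mem_singleton_iff,
    DFunLike.coe_fn_eq]

theorem locallyCompactSpace_inf_transSubgroup {H : Subgroup (IsomE n)}
    (hlc : LocallyCompactSpace H) : LocallyCompactSpace ↥(H ⊓ transSubgroup n) := by
  have hle : ((H ⊓ transSubgroup n : Subgroup (IsomE n)) : Set (IsomE n)) ⊆ H := inf_le_left
  refine IsClosedEmbedding.locallyCompactSpace (f := Set.inclusion hle)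
    ⟨IsEmbedding.inclusion hle, ?_⟩
  rw [Set.range_inclusion]
  convert isClosed_transSubgroup.preimage continuous_subtype_val using 1
  ext x
  simp

end Isometries

theorem translation_part_qi_embedding_general (n : ℕ) (H : Subgroup (IsomE n))
    (hlc : LocallyCompactSpace ↥H)
    (S : Set ↥(H ⊓ transSubgroup n)) (hScpt : IsCompact S)
    (hSgen : Subgroup.closure S = ⊤) :
    ∃ C D : ℝ, 1 ≤ C ∧ 0 ≤ D ∧
      ∀ g g' : ↥(H ⊓ transSubgroup n),
        (1 / C) * (wordLength S (g⁻¹ * g') : ℝ) - D ≤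
            ‖tPart (g : IsomE n) - tPart (g' : IsomE n)‖ ∧
          ‖tPart (g : IsomE n) - tPart (g' : IsomE n)‖ ≤
            C * (wordLength S (g⁻¹ * g') : ℝ) + D := by
  have hemb := isEmbedding_translationHom H
  have := locallyCompactSpace_inf_transSubgroup hlc
  have := hemb.t2Space
  have := hemb.isInducing.topologicalGroup (translationHom H)
  obtain ⟨C, D, hC, hD, hbounds⟩ := hemb.isInducing.exists_wordLength_norm_bounds hScpt hSgen
  refine ⟨C, D, hC, hD, fun g g' => ?_⟩
  have hdist : ‖tPart (g : IsomE n) - tPart (g' : IsomE n)‖ = ‖translationHom H (g⁻¹ * g')‖ := by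
    rw [map_mul, map_inv, ← norm_toAdd, toAdd_mul, toAdd_inv, ← norm_neg, neg_add_eq_sub, neg_sub]
    rfl
  rw [hdist]
  exact hbounds _

/-- **The translation part embeds quasi-isometrically into `T ≅ ℝⁿ`.**
For a split, locally compact subgroup `H ≤ Isom(𝔼ⁿ)` and any word metric on
`T_H = T ∩ H` coming from a compact generating set `S`, the map `t^λ ↦ λ` is a
quasi-isometric embedding into Euclidean space. -/
theorem translation_part_qi_embedding (n : ℕ) (H : Subgroup (IsomE n))
    (hsplit : Splits H) (hlc : LocallyCompactSpace ↥H)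
    (S : Set ↥(H ⊓ transSubgroup n)) (hScpt : IsCompact S)
    (hSgen : Subgroup.closure S = ⊤) :
    ∃ C D : ℝ, 1 ≤ C ∧ 0 ≤ D ∧
      ∀ g g' : ↥(H ⊓ transSubgroup n),
        (1 / C) * (wordLength S (g⁻¹ * g') : ℝ) - D ≤
            ‖tPart (g : IsomE n) - tPart (g' : IsomE n)‖ ∧
          ‖tPart (g : IsomE n) - tPart (g' : IsomE n)‖ ≤
            C * (wordLength S (g⁻¹ * g') : ℝ) + D :=
  translation_part_qi_embedding_general n H hlc S hScpt hSgen
end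
end

section
/- Let H = T_H ⋊ H₀ be a split group of Euclidean isometries and let h = t^λ h₀ and h′ = t^{λ′} h₀′ be conjugate elements of H, where λ, λ′ ∈ L_H and h₀, h₀′ ∈ H₀. Then the coconjugation set satisfies C_H(h,h′) = ⨆_{u ∈ C_{H₀}^{λ,λ′}(h₀,h₀′)} t^{η_u + (Fix(h₀′) ∩ L_H)} u (a disjoint union over the translation-compatible part), where for each u the element η_u ∈ L_H is a particular solution of the equation λ′ − uλ = (Id − h₀′)η. -/
noncomputable section

/-- `Mod_H(g) = (g − Id) L_H`. -/
def ModH {n : ℕ} (H : Subgroup (IsomE n)) (g : OrthGrp n) : Set (En n) :=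
  (fun x => g x - x) '' latticeLH H

/-- The translation-compatible part `C_{H₀}^{λ,λ'}(h₀,h₀')` of the coconjugation set of
the spherical parts: those `u ∈ H₀` with `u h₀ u⁻¹ = h₀'` and `λ' − uλ ∈ Mod_H(h₀')`. -/
def TCpart {n : ℕ} (H : Subgroup (IsomE n)) (h h' : IsomE n) : Set (OrthGrp n) :=
  {u | SemidirectProduct.inr u ∈ H ∧ u * h.right * u⁻¹ = h'.right ∧
    tPart h' - u (tPart h) ∈ ModH H h'.right}

/-- The piece `t^{η_u + (Fix(h₀') ∩ L_H)} u` of the coconjugation set. -/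
def coconjPiece {n : ℕ} (H : Subgroup (IsomE n)) (h' : IsomE n)
    (η : OrthGrp n → En n) (u : OrthGrp n) : Set (IsomE n) :=
  (fun μ => SemidirectProduct.inl (Multiplicative.ofAdd (η u + μ)) *
      SemidirectProduct.inr u) '' {μ | h'.right μ = μ ∧ μ ∈ latticeLH H}

/-!
Write `k = t^τ u`. Conjugating `h = t^λ h₀` by `k` gives `t^{τ + uλ − (u h₀ u⁻¹) τ} (u h₀ u⁻¹)`, so
`k h k⁻¹ = h'` says exactly that `u h₀ u⁻¹ = h₀'` and that `τ` solves the affine equation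
`λ' − uλ = (Id − h₀')τ`. Since `H` splits, `k ∈ H` means `u ∈ H₀` and `τ ∈ L_H`, so the spherical
parts of the conjugators are the translation-compatible `u`, and for each of them the solutions
`τ ∈ L_H` form the coset `η_u + (Fix(h₀') ∩ L_H)` of a particular solution. Distinct `u` give
disjoint pieces because `u` is read off as the spherical part.
-/

section

variable {n : ℕ}

def latticeAddSubgroup (H : Subgroup (IsomE n)) : AddSubgroup (En n) where
  carrier := latticeLH H
  add_mem' ha hb := by simpa [latticeLH] using H.mul_mem ha hb
  zero_mem' := by simp [latticeLH]
  neg_mem' ha := by simpa [latticeLH] using H.inv_mem ha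

lemma tPart_mul (g k : IsomE n) : tPart (g * k) = tPart g + g.right (tPart k) := rfl

lemma tPart_inv (g : IsomE n) : tPart g⁻¹ = -g.right⁻¹ (tPart g) := by
  simp [tPart, rotAction]

lemma tPart_conj (k h : IsomE n) :
    tPart (k * h * k⁻¹) = tPart k + k.right (tPart h) - (k * h * k⁻¹).right (tPart k) := by
  simp [tPart_mul, tPart_inv, sub_eq_add_neg, add_assoc]

lemma inl_tPart_mul_inr_right (k : IsomE n) :
    SemidirectProduct.inl (Multiplicative.ofAdd (tPart k)) * SemidirectProduct.inr k.right = k :=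
  SemidirectProduct.inl_left_mul_inr_right k

lemma Splits.mem_iff {H : Subgroup (IsomE n)} (hsplit : Splits H) (k : IsomE n) :
    k ∈ H ↔ tPart k ∈ latticeLH H ∧ SemidirectProduct.inr k.right ∈ H :=
  ⟨hsplit k, fun ⟨hl, hr⟩ => inl_tPart_mul_inr_right k ▸ H.mul_mem hl hr⟩

lemma conj_eq_iff (k h h' : IsomE n) :
    k * h * k⁻¹ = h' ↔ k.right * h.right * k.right⁻¹ = h'.right ∧
      tPart h' - k.right (tPart h) = tPart k - h'.right (tPart k) := by
  have hright : (k * h * k⁻¹).right = k.right * h.right * k.right⁻¹ := by simp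
  rw [SemidirectProduct.ext_iff, and_comm, hright]
  refine and_congr_right fun hr => ?_
  rw [← Multiplicative.toAdd.injective.eq_iff]
  change tPart (k * h * k⁻¹) = tPart h' ↔ _
  rw [tPart_conj, hright, hr]
  constructor <;> intro e
  · rw [← e]; abel_nf
  · rw [← sub_add_cancel (tPart h') (k.right (tPart h)), e]; abel_nf

lemma right_mem_TCpart {H : Subgroup (IsomE n)} (hsplit : Splits H) {h h' k : IsomE n}
    (hk : k ∈ H ∧ k * h * k⁻¹ = h') : k.right ∈ TCpart H h h' := by
  obtain ⟨hL, hr⟩ := hsplit k hk.1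
  obtain ⟨hright, heq⟩ := (conj_eq_iff k h h').mp hk.2
  exact ⟨hr, hright, -tPart k, (latticeAddSubgroup H).neg_mem hL, by
    dsimp only; rw [heq, map_neg]; abel_nf⟩

lemma exists_solution_of_mem_TCpart {H : Subgroup (IsomE n)} {h h' : IsomE n} {u : OrthGrp n}
    (hu : u ∈ TCpart H h h') :
    ∃ η ∈ latticeLH H, tPart h' - u (tPart h) = η - h'.right η := by
  obtain ⟨-, -, ν, hν, hνeq⟩ := hu
  exact ⟨-ν, (latticeAddSubgroup H).neg_mem hν, by
    rw [← hνeq, map_neg]; abel_nf⟩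

lemma isFixedPt_sub_iff {G F : Type*} [AddCommGroup G] [FunLike F G G]
    [AddMonoidHomClass F G G] (f : F) (a b : G) :
    Function.IsFixedPt f (b - a) ↔ a - f a = b - f b := by
  rw [Function.IsFixedPt, map_sub]
  grind

lemma mem_coconj_iff_of_solution {H : Subgroup (IsomE n)} (hsplit : Splits H)
    {h h' k : IsomE n} (hu : k.right ∈ TCpart H h h') {η : En n} (hηL : η ∈ latticeLH H)
    (hη : tPart h' - k.right (tPart h) = η - h'.right η) :
    k ∈ H ∧ k * h * k⁻¹ = h' ↔
      h'.right (tPart k - η) = tPart k - η ∧ tPart k - η ∈ latticeLH H := by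
  obtain ⟨hr, hright, -⟩ := hu
  rw [hsplit.mem_iff, conj_eq_iff, hη]
  simp only [hr, hright, and_true, true_and]
  rw [← isFixedPt_sub_iff, and_comm]
  refine and_congr_right' ?_
  rw [sub_eq_add_neg]
  exact ((latticeAddSubgroup H).add_mem_cancel_right ((latticeAddSubgroup H).neg_mem hηL)).symm

lemma mem_coconjPiece_iff {H : Subgroup (IsomE n)} {h' : IsomE n} {η : OrthGrp n → En n}
    {u : OrthGrp n} {k : IsomE n} :
    k ∈ coconjPiece H h' η u ↔
      k.right = u ∧ h'.right (tPart k - η u) = tPart k - η u ∧ tPart k - η u ∈ latticeLH H := by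
  constructor
  · rintro ⟨μ, hμ, rfl⟩
    simpa [tPart] using hμ
  · rintro ⟨rfl, hμ⟩
    exact ⟨tPart k - η k.right, hμ, by
      dsimp only; rw [add_sub_cancel, inl_tPart_mul_inr_right]⟩

lemma pairwiseDisjoint_coconjPiece (H : Subgroup (IsomE n)) (h' : IsomE n)
    (η : OrthGrp n → En n) (S : Set (OrthGrp n)) : S.PairwiseDisjoint (coconjPiece H h' η) :=
  fun _ _ _ _ huv => Set.disjoint_left.mpr fun _ hku hkv =>
    huv <| (mem_coconjPiece_iff.mp hku).1.symm.trans (mem_coconjPiece_iff.mp hkv).1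

end

theorem coconjugation_general (n : ℕ) (H : Subgroup (IsomE n)) (hsplit : Splits H)
    (h h' : IsomE n) :
    ∃ η : OrthGrp n → En n,
      (∀ u ∈ TCpart H h h', η u ∈ latticeLH H ∧
          tPart h' - u (tPart h) = η u - h'.right (η u)) ∧
      ({k ∈ (H : Set (IsomE n)) | k * h * k⁻¹ = h'} =
          ⋃ u ∈ TCpart H h h', coconjPiece H h' η u) ∧
      (TCpart H h h').PairwiseDisjoint (coconjPiece H h' η) := by
  choose! η hηL hη using fun u (hu : u ∈ TCpart H h h') => exists_solution_of_mem_TCpart hu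
  refine ⟨η, fun u hu => ⟨hηL u hu, hη u hu⟩, ?_, pairwiseDisjoint_coconjPiece H h' η _⟩
  ext k
  simp only [Set.mem_ofPred_eq, Set.mem_iUnion, mem_coconjPiece_iff, exists_prop]
  constructor
  · intro hk
    have hu := right_mem_TCpart hsplit hk
    exact ⟨k.right, hu, rfl, (mem_coconj_iff_of_solution hsplit hu (hηL _ hu) (hη _ hu)).mp hk⟩
  · rintro ⟨u, hu, rfl, hk⟩
    exact (mem_coconj_iff_of_solution hsplit hu (hηL _ hu) (hη _ hu)).mpr hk

/-- **Coconjugation theorem.**  Let `H = T_H ⋊ H₀` be a split group of Euclidean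
isometries and `h = t^λ h₀`, `h' = t^{λ'} h₀'` conjugate elements of `H`.  Then the
coconjugation set `C_H(h,h') = {k ∈ H : khk⁻¹ = h'}` is the disjoint union, over `u` in
the translation-compatible part, of the sets `t^{η_u + (Fix(h₀') ∩ L_H)} u`, where each
`η_u ∈ L_H` is a particular solution of `λ' − uλ = (Id − h₀')η`. -/
theorem coconjugation (n : ℕ) (H : Subgroup (IsomE n)) (hsplit : Splits H)
    (h h' : IsomE n) (hh : h ∈ H) (hh' : h' ∈ H)
    (hconj : ∃ k ∈ H, k * h * k⁻¹ = h') :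
    ∃ η : OrthGrp n → En n,
      (∀ u ∈ TCpart H h h', η u ∈ latticeLH H ∧
          tPart h' - u (tPart h) = η u - h'.right (η u)) ∧
      ({k ∈ (H : Set (IsomE n)) | k * h * k⁻¹ = h'} =
          ⋃ u ∈ TCpart H h h', coconjPiece H h' η u) ∧
      (TCpart H h h').PairwiseDisjoint (coconjPiece H h' η) :=
  coconjugation_general n H hsplit h h'
end
end

section
/- Let H = T_H ⋊ H₀ be a locally compact split subgroup of Isom(𝔼ⁿ), let h = t^λ h₀ and h′ = t^{λ′} h₀′ be conjugate elements of H, and let u ∈ H₀ be the spherical part of some element of C_H(h,h′). Let η₀ be the minimum-norm real solution of the equation (Id − h₀′)η = λ′ − uλ in span_ℝ(L_H). Then there is a constant k₀ ≥ 0, depending only on H (and not on h, h′, u), such that some η_u ∈ L_H with λ′ − uλ = (Id − h₀′)η_u satisfies ‖η_u‖ ≤ ‖η₀‖ + k₀. -/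
noncomputable section

/-!
Write `g = h₀′`. The translation part `η` of a conjugator `k` with `k h k⁻¹ = h′` is a lattice
solution, and `η - η₀` is a `g`-fixed vector of `span_ℝ L_H`; so it suffices to approximate
`g`-fixed vectors of `span_ℝ L_H` by `g`-fixed vectors of `L_H`, within a bound independent of
`g`. Local compactness of `H` makes `L_H` closed, hence the sum of its largest linear subspace
`V` and a discrete lattice `Λ ⊆ Vᗮ`, both preserved by `g`. The `V`-component needs no
approximation. On `Λ`, `g` permutes the finitely many lattice vectors of bounded norm, so it has
finite order; averaging over its powers shows that the `g`-fixed lattice vectors span the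
`g`-fixed subspace of `span_ℝ Λ`, which gives a bound for each `g`. That bound only depends on
the values of `g` on a finite spanning set of `Λ`, and these values range over a finite set.
-/

open Submodule Filter Topology

theorem AddSubgroup.isClosed_of_locallyCompactSpace {E : Type*} [NormedAddCommGroup E]
    (L : AddSubgroup E) [LocallyCompactSpace L] : IsClosed (L : Set E) := by
  obtain ⟨K, hK, hK0⟩ := exists_compact_mem_nhds (0 : L)
  obtain ⟨ε, hε, hεK⟩ := Metric.mem_nhds_iff.1 hK0
  have hKL : ((↑) '' K : Set E) ⊆ L := by rintro - ⟨x, -, rfl⟩; exact x.2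
  have hball : Metric.ball 0 ε ∩ (L : Set E) ⊆ (↑) '' K := fun x ⟨hx, hxL⟩ =>
    ⟨⟨x, hxL⟩, hεK (by simpa using hx), rfl⟩
  refine isClosed_of_closure_subset fun x hx => ?_
  obtain ⟨l, hl, hxl⟩ := Metric.mem_closure_iff.1 hx ε hε
  have hxl_closure : x - l ∈ L.topologicalClosure :=
    L.topologicalClosure.sub_mem hx (L.le_topologicalClosure hl)
  have hxl_ball : x - l ∈ Metric.ball 0 ε := by simpa [dist_eq_norm] using hxl
  have hxl_K : x - l ∈ _root_.closure ((↑) '' K : Set E) :=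
    _root_.closure_mono hball (Metric.isOpen_ball.inter_closure ⟨hxl_ball, hxl_closure⟩)
  have : x - l ∈ (L : Set E) :=
    hKL ((hK.image continuous_subtype_val).isClosed.closure_subset hxl_K)
  simpa using L.add_mem this hl

section InnerProductSpace

variable {E : Type*} [NormedAddCommGroup E] [InnerProductSpace ℝ E]

namespace AddSubgroup

variable (L : AddSubgroup E)

def linearPart : Submodule ℝ E where
  carrier := {v | ∀ t : ℝ, t • v ∈ L}
  zero_mem' _ := by simp
  add_mem' ha hb t := by simpa only [smul_add] using L.add_mem (ha t) (hb t)
  smul_mem' c _ hv t := by simpa only [smul_smul] using hv (t * c)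

def discretePart : AddSubgroup E := L ⊓ L.linearPartᗮ.toAddSubgroup

variable {L}

lemma linearPart_subset : (L.linearPart : Set E) ⊆ L := fun v hv => by simpa using hv 1

lemma mem_linearPart_of_tendsto {ι : Type*} {l : Filter ι} [l.NeBot] (hL : IsClosed (L : Set E))
    {c : ι → ℝ} {w : ι → E} {z : E} (hc_pos : ∀ i, 0 < c i) (hc : Tendsto c l (𝓝 0))
    (hw : Tendsto w l (𝓝 z)) (hmem : ∀ i, c i • w i ∈ L) : z ∈ L.linearPart := by
  intro t
  have hfloor : Tendsto (fun i => (⌊t / c i⌋ : ℝ) * c i) l (𝓝 t) := by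
    refine tendsto_of_tendsto_of_tendsto_of_le_of_le (by simpa using tendsto_const_nhds.sub hc)
      tendsto_const_nhds (fun i => ?_) (fun i => ?_)
    · have := (div_lt_iff₀ (hc_pos i)).1 (Int.lt_floor_add_one (t / c i))
      linarith [add_one_mul (⌊t / c i⌋ : ℝ) (c i)]
    · exact (le_div_iff₀ (hc_pos i)).1 (Int.floor_le _)
  refine hL.mem_of_tendsto (hfloor.smul hw) (.of_forall fun i => ?_)
  rw [mul_smul, Int.cast_smul_eq_zsmul]
  exact L.zsmul_mem (hmem i) _

lemma sub_starProjection_mem_span_discretePart [FiniteDimensional ℝ E] {v : E}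
    (hv : v ∈ span ℝ (L : Set E)) :
    v - L.linearPart.starProjection v ∈ span ℝ (L.discretePart : Set E) := by
  set V := L.linearPart
  let f : E →ₗ[ℝ] E := LinearMap.id - (V.starProjection : E →ₗ[ℝ] E)
  have hf : span ℝ (L : Set E) ≤ (span ℝ (L.discretePart : Set E)).comap f :=
    span_le.2 fun x hx => subset_span
      ⟨L.sub_mem hx (linearPart_subset (V.starProjection_apply_mem x)),
        V.sub_starProjection_mem_orthogonal x⟩
  exact hf hv

theorem discreteTopology_discretePart [FiniteDimensional ℝ E] (hL : IsClosed (L : Set E)) :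
    DiscreteTopology L.discretePart := by
  -- otherwise a limit direction of short nonzero vectors of `L.discretePart` would lie in
  -- `L.linearPart ⊓ L.linearPartᗮ = ⊥`
  by_contra hnd
  have hsmall : ∀ k : ℕ, ∃ v ∈ L.discretePart, v ≠ 0 ∧ ‖v‖ < 1 / (k + 1) := by
    intro k
    by_contra! h
    exact hnd (.of_forall_le_norm (E := L.discretePart) (by positivity)
      fun v hv => h v v.2 (by simpa using hv))
  choose v hvΛ hv0 hvε using hsmall
  have hu : ∀ k, ‖v k‖⁻¹ • v k ∈ Metric.sphere (0 : E) 1 := fun k => by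
    simp [norm_smul, hv0 k]
  obtain ⟨z, hz, φ, hφ, hzlim⟩ := (isCompact_sphere (0 : E) 1).tendsto_subseq hu
  have hv_lim : Tendsto (fun k => ‖v k‖) atTop (𝓝 0) :=
    squeeze_zero (fun _ => norm_nonneg _) (fun k => (hvε k).le)
      tendsto_one_div_add_atTop_nhds_zero_nat
  have hzV : z ∈ L.linearPart :=
    mem_linearPart_of_tendsto hL (fun k => norm_pos_iff.2 (hv0 (φ k)))
      (hv_lim.comp hφ.tendsto_atTop) hzlim
      fun k => by simpa [smul_inv_smul₀ (norm_ne_zero_iff.2 (hv0 (φ k)))] using (hvΛ (φ k)).1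
  have hzVperp : z ∈ L.linearPartᗮ :=
    L.linearPart.isClosed_orthogonal.mem_of_tendsto hzlim
      (.of_forall fun k => L.linearPartᗮ.smul_mem _ (hvΛ (φ k)).2)
  have hz0 : z = 0 := by
    simpa using (Submodule.eq_bot_iff _).1 L.linearPart.inf_orthogonal_eq_bot z ⟨hzV, hzVperp⟩
  simp [hz0] at hz

theorem exists_norm_sub_le [FiniteDimensional ℝ E] (Λ : AddSubgroup E) [DiscreteTopology Λ] :
    ∃ c, ∀ v ∈ span ℝ (Λ : Set E), ∃ p ∈ Λ, ‖v - p‖ ≤ c := by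
  set M := span ℝ (Λ : Set E)
  set Λ' : Submodule ℤ M := (AddSubgroup.toIntSubmodule Λ).comap (M.subtype.restrictScalars ℤ)
  have : DiscreteTopology Λ' :=
    DiscreteTopology.preimage_of_continuous_injective (Λ : Set E)
      (LinearMap.continuous_of_finiteDimensional M.subtype) (injective_subtype _)
  have : IsZLattice ℝ Λ' := ⟨by
    rw [← (Submodule.map_injective_of_injective (injective_subtype M)).eq_iff, Submodule.map_span,
      Submodule.map_top, Submodule.range_subtype]
    congr 1
    ext x
    simpa [Λ'] using fun hx : x ∈ Λ => subset_span hx⟩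
  let b := (Module.Free.chooseBasis ℤ Λ').ofZLatticeBasis ℝ Λ'
  refine ⟨∑ i, ‖b i‖, fun v hv => ⟨ZSpan.floor b ⟨v, hv⟩, ?_, ZSpan.norm_fract_le b ⟨v, hv⟩⟩⟩
  exact ((Module.Free.chooseBasis ℤ Λ').ofZLatticeBasis_span ℝ Λ').le (ZSpan.floor b ⟨v, hv⟩).2

end AddSubgroup

def isometryStabilizer (S : Set E) : Subgroup (E ≃ₗᵢ[ℝ] E) where
  carrier := {g | ∀ x, g x ∈ S ↔ x ∈ S}
  mul_mem' hg hh x := (hg _).trans (hh x)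
  one_mem' _ := Iff.rfl
  inv_mem' {g} hg x := by rw [← hg, LinearIsometryEquiv.coe_inv, g.apply_symm_apply]

section Stabilizer

variable {g : E ≃ₗᵢ[ℝ] E}

lemma mem_isometryStabilizer_iff_map_eq {K : Submodule ℝ E} :
    g ∈ isometryStabilizer (K : Set E) ↔ K.map (g.toLinearEquiv : E →ₗ[ℝ] E) = K := by
  simp only [SetLike.ext_iff, Submodule.mem_map_equiv]
  constructor <;> intro h x
  · simpa using (h (g.symm x)).symm
  · simpa using (h (g x)).symm

lemma mem_isometryStabilizer_orthogonal {K : Submodule ℝ E}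
    (hg : g ∈ isometryStabilizer (K : Set E)) : g ∈ isometryStabilizer (Kᗮ : Set E) := by
  rw [mem_isometryStabilizer_iff_map_eq] at hg ⊢
  rw [K.map_orthogonal_equiv g, hg]

lemma Submodule.apply_starProjection_eq_self {K : Submodule ℝ E} [K.HasOrthogonalProjection]
    (hg : g ∈ isometryStabilizer (K : Set E)) {v : E} (hv : g v = v) :
    g (K.starProjection v) = K.starProjection v := by
  have := K.starProjection_map_apply g v
  simp only [mem_isometryStabilizer_iff_map_eq.1 hg, g.symm_apply_eq.2 hv.symm] at this
  exact this.symm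

namespace AddSubgroup

variable {L : AddSubgroup E}

lemma mem_isometryStabilizer_linearPart (hg : g ∈ isometryStabilizer (L : Set E)) :
    g ∈ isometryStabilizer (L.linearPart : Set E) := fun x =>
  forall_congr' fun t => by rw [← map_smul]; exact hg _

lemma mem_isometryStabilizer_discretePart (hg : g ∈ isometryStabilizer (L : Set E)) :
    g ∈ isometryStabilizer (L.discretePart : Set E) := fun x =>
  and_congr (hg x) (mem_isometryStabilizer_orthogonal (mem_isometryStabilizer_linearPart hg) x)

end AddSubgroup

end Stabilizer

namespace LinearIsometryEquiv

variable (g : E ≃ₗᵢ[ℝ] E)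

def fixedSubmodule : Submodule ℝ E := LinearMap.eqLocus (g.toLinearEquiv : E →ₗ[ℝ] E) LinearMap.id

variable {g}

@[simp]
lemma mem_fixedSubmodule {x : E} : x ∈ g.fixedSubmodule ↔ g x = x := Iff.rfl

lemma pow_apply_eq_self {v : E} (hv : g v = v) (j : ℕ) : (g ^ j) v = v := by
  induction j with
  | zero => rfl
  | succ j ih => rw [pow_succ, coe_mul, Function.comp_apply, hv, ih]

lemma apply_eq_of_domRestrict_eq {g' : E ≃ₗᵢ[ℝ] E} {s : Set E}
    (h : s.domRestrict g = s.domRestrict g') {v : E} (hv : v ∈ span ℝ s) : g v = g' v :=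
  LinearMap.eqOn_span (f := (g.toLinearEquiv : E →ₗ[ℝ] E)) (g := g'.toLinearEquiv)
    (fun x hx => congrFun h ⟨x, hx⟩) hv

end LinearIsometryEquiv

namespace AddSubgroup

lemma mem_span_inf_fixedSubmodule {Λ : AddSubgroup E} {g : E ≃ₗᵢ[ℝ] E}
    (hg : g ∈ isometryStabilizer (Λ : Set E)) {m : ℕ} (hm : 0 < m)
    (hgm : ∀ v ∈ span ℝ (Λ : Set E), (g ^ m) v = v) {v : E}
    (hv : v ∈ span ℝ (Λ : Set E)) (hgv : g v = v) :
    v ∈ span ℝ ((Λ ⊓ g.fixedSubmodule.toAddSubgroup : AddSubgroup E) : Set E) := by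
  set A : E →ₗ[ℝ] E := ∑ j ∈ Finset.range m, ((g ^ j).toLinearEquiv : E →ₗ[ℝ] E)
  have hA (x : E) : A x = ∑ j ∈ Finset.range m, (g ^ j) x := by simp [A]
  have hAΛ : ∀ p ∈ Λ, A p ∈ Λ ⊓ g.fixedSubmodule.toAddSubgroup := by
    intro p hp
    refine ⟨hA p ▸ Λ.sum_mem fun j _ => (pow_mem hg j p).2 hp, ?_⟩
    have hcycle := (Finset.sum_range_succ' (fun j => (g ^ j) p) m).symm.trans
      (Finset.sum_range_succ _ m)
    have hsucc (j : ℕ) : g ((g ^ j) p) = (g ^ (j + 1)) p := by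
      rw [pow_succ', LinearIsometryEquiv.coe_mul, Function.comp_apply]
    rw [hgm p (subset_span hp), pow_zero, LinearIsometryEquiv.coe_one, id] at hcycle
    show g (A p) = A p
    rw [hA, map_sum]
    simpa only [hsucc] using add_right_cancel hcycle
  have hAv : A v = (m : ℝ) • v := by
    simp [hA, LinearIsometryEquiv.pow_apply_eq_self hgv, Nat.cast_smul_eq_nsmul]
  have hAv_mem : A v ∈ span ℝ ((Λ ⊓ g.fixedSubmodule.toAddSubgroup : AddSubgroup E) : Set E) :=
    (span_le (p := (span ℝ _).comap A)).2 (fun p hp => subset_span (hAΛ p hp)) hv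
  rw [hAv] at hAv_mem
  simpa [hm.ne'] using smul_mem _ (m : ℝ)⁻¹ hAv_mem

section Lattice

variable [FiniteDimensional ℝ E] (Λ : AddSubgroup E) [DiscreteTopology Λ]

lemma finite_range_domRestrict_isometryStabilizer {s : Set E} (hs : s.Finite) (hsΛ : s ⊆ Λ) :
    (Set.range fun g : isometryStabilizer (Λ : Set E) =>
      s.domRestrict ⇑(g : E ≃ₗᵢ[ℝ] E)).Finite := by
  have : Finite s := hs.to_subtype
  obtain ⟨r, hr⟩ := hs.isBounded.subset_closedBall 0
  have hball : (Metric.closedBall 0 r ∩ (Λ : Set E)).Finite :=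
    Metric.finite_isBounded_inter_isClosed DiscreteTopology.isDiscrete Metric.isBounded_closedBall
      inferInstance
  refine (Set.Finite.pi (t := fun _ : s => Metric.closedBall 0 r ∩ (Λ : Set E))
    fun _ => hball).subset ?_
  rintro _ ⟨⟨g, hg⟩, rfl⟩
  refine Set.mem_univ_pi.2 fun x => ⟨?_, (hg x).2 (hsΛ x.2)⟩
  simpa using hr x.2

variable {Λ}

lemma exists_pow_apply_eq_self {g : E ≃ₗᵢ[ℝ] E} (hg : g ∈ isometryStabilizer (Λ : Set E)) :
    ∃ m, 0 < m ∧ ∀ v ∈ span ℝ (Λ : Set E), (g ^ m) v = v := by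
  obtain ⟨s, hsΛ, hspan, hli⟩ := exists_linearIndependent ℝ (Λ : Set E)
  have hpow (j : ℕ) : s.domRestrict ⇑(g ^ j) ∈
      Set.range fun g : isometryStabilizer (Λ : Set E) => s.domRestrict ⇑(g : E ≃ₗᵢ[ℝ] E) :=
    ⟨⟨g ^ j, pow_mem hg j⟩, rfl⟩
  obtain ⟨a, b, hab, heq⟩ := (Λ.finite_range_domRestrict_isometryStabilizer hli.setFinite
    hsΛ).exists_lt_map_eq_of_forall_mem hpow
  refine ⟨b - a, Nat.sub_pos_of_lt hab, fun v hv => (g ^ a).injective ?_⟩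
  rw [← Function.comp_apply (f := g ^ a), ← LinearIsometryEquiv.coe_mul, pow_mul_pow_sub g hab.le]
  exact (LinearIsometryEquiv.apply_eq_of_domRestrict_eq heq (hspan ▸ hv)).symm

lemma exists_fixed_norm_sub_le {g : E ≃ₗᵢ[ℝ] E} (hg : g ∈ isometryStabilizer (Λ : Set E)) :
    ∃ c, ∀ v ∈ span ℝ (Λ : Set E), g v = v → ∃ q ∈ Λ, g q = q ∧ ‖v - q‖ ≤ c := by
  obtain ⟨m, hm, hgm⟩ := exists_pow_apply_eq_self hg
  have : DiscreteTopology (Λ ⊓ g.fixedSubmodule.toAddSubgroup : AddSubgroup E) :=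
    .of_subset ‹DiscreteTopology Λ› (inf_le_left (a := Λ))
  obtain ⟨c, hc⟩ := (Λ ⊓ g.fixedSubmodule.toAddSubgroup).exists_norm_sub_le
  refine ⟨c, fun v hv hgv => ?_⟩
  obtain ⟨q, ⟨hqΛ, hgq⟩, hvq⟩ := hc v (mem_span_inf_fixedSubmodule hg hm hgm hv hgv)
  exact ⟨q, hqΛ, hgq, hvq⟩

variable (Λ) in
theorem exists_forall_isometryStabilizer_fixed_norm_sub_le :
    ∃ c ≥ 0, ∀ g ∈ isometryStabilizer (Λ : Set E), ∀ v ∈ span ℝ (Λ : Set E), g v = v →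
      ∃ q ∈ Λ, g q = q ∧ ‖v - q‖ ≤ c := by
  obtain ⟨s, hsΛ, hspan, hli⟩ := exists_linearIndependent ℝ (Λ : Set E)
  have hev : ∀ φ ∈ Set.range fun g : isometryStabilizer (Λ : Set E) =>
      s.domRestrict ⇑(g : E ≃ₗᵢ[ℝ] E), ∀ᶠ c in atTop, ∀ g ∈ isometryStabilizer (Λ : Set E),
        s.domRestrict ⇑g = φ → ∀ v ∈ span ℝ (Λ : Set E), g v = v →
          ∃ q ∈ Λ, g q = q ∧ ‖v - q‖ ≤ c := by
    rintro _ ⟨⟨g₀, hg₀⟩, rfl⟩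
    obtain ⟨c₀, hc₀⟩ := exists_fixed_norm_sub_le hg₀
    filter_upwards [eventually_ge_atTop c₀] with c hc g _ hgg₀ v hv hgv
    have heq {x : E} (hx : x ∈ span ℝ (Λ : Set E)) : g x = g₀ x :=
      LinearIsometryEquiv.apply_eq_of_domRestrict_eq hgg₀ (hspan ▸ hx)
    obtain ⟨q, hq, hg₀q, hvq⟩ := hc₀ v hv ((heq hv).symm.trans hgv)
    exact ⟨q, hq, (heq (subset_span hq)).trans hg₀q, hvq.trans hc⟩
  obtain ⟨c, hc, hc0⟩ := (((eventually_all_finite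
    (Λ.finite_range_domRestrict_isometryStabilizer hli.setFinite hsΛ)).2 hev).and
      (eventually_ge_atTop 0)).exists
  exact ⟨c, hc0, fun g hg => hc _ ⟨⟨g, hg⟩, rfl⟩ g hg rfl⟩

end Lattice

theorem exists_forall_isometryStabilizer_fixed_norm_sub_le_of_isClosed [FiniteDimensional ℝ E]
    {L : AddSubgroup E} (hL : IsClosed (L : Set E)) :
    ∃ c ≥ 0, ∀ g ∈ isometryStabilizer (L : Set E), ∀ v ∈ span ℝ (L : Set E), g v = v →
      ∃ q ∈ L, g q = q ∧ ‖v - q‖ ≤ c := by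
  have := discreteTopology_discretePart hL
  obtain ⟨c, hc0, hc⟩ := L.discretePart.exists_forall_isometryStabilizer_fixed_norm_sub_le
  refine ⟨c, hc0, fun g hg v hv hgv => ?_⟩
  set V := L.linearPart
  have hgv₀ := V.apply_starProjection_eq_self (mem_isometryStabilizer_linearPart hg) hgv
  obtain ⟨q, hq, hgq, hvq⟩ := hc g (mem_isometryStabilizer_discretePart hg) _
    (sub_starProjection_mem_span_discretePart hv) (by rw [map_sub, hgv, hgv₀])
  refine ⟨V.starProjection v + q, L.add_mem (linearPart_subset (V.starProjection_apply_mem v)) hq.1,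
    by rw [map_add, hgv₀, hgq], ?_⟩
  rwa [← sub_sub]

end AddSubgroup

end InnerProductSpace

section Isometries

open SemidirectProduct

variable {n : ℕ}

def translationLattice (H : Subgroup (IsomE n)) : AddSubgroup (En n) :=
  Subgroup.toAddSubgroup' (H.comap inl)

lemma continuous_tPart : Continuous (tPart : IsomE n → En n) :=
  continuous_toAdd.comp (continuous_induced_dom : Continuous fun g : IsomE n => (g.left, g.right)).fst

lemma continuous_inl_ofAdd : Continuous fun v : En n => (inl (Multiplicative.ofAdd v) : IsomE n) :=
  continuous_induced_rng.2 (continuous_ofAdd.prodMk continuous_const)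

lemma continuous_coe_right : Continuous fun g : IsomE n => (g.right : En n → En n) :=
  continuous_induced_dom.comp
    (continuous_induced_dom : Continuous fun g : IsomE n => (g.left, g.right)).snd

theorem isClosed_translationLattice {H : Subgroup (IsomE n)} (hsplit : Splits H)
    [LocallyCompactSpace H] : IsClosed (translationLattice H : Set (En n)) := by
  let ι : translationLattice H → H := fun v => ⟨inl (Multiplicative.ofAdd v), v.2⟩
  let π : H → translationLattice H := fun h => ⟨tPart (h : IsomE n), (hsplit h h.2).1⟩
  have hemb : Topology.IsEmbedding ι := Function.LeftInverse.isEmbedding (f := π) (fun _ => rfl)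
    ((continuous_tPart.comp continuous_subtype_val).subtype_mk _)
    ((continuous_inl_ofAdd.comp continuous_subtype_val).subtype_mk _)
  have hrange : Set.range ι = (fun h : H => ((h : IsomE n).right : En n → En n)) ⁻¹' {id} := by
    ext h
    refine ⟨by rintro ⟨v, rfl⟩; rfl, fun hid => ⟨π h, Subtype.ext ?_⟩⟩
    have hright : (h : IsomE n).right = 1 := LinearIsometryEquiv.ext (congrFun hid)
    show inl (h : IsomE n).left = (h : IsomE n)
    simpa [hright] using inl_left_mul_inr_right (h : IsomE n)
  have : LocallyCompactSpace (translationLattice H) :=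
    (Topology.IsClosedEmbedding.mk hemb (hrange ▸ isClosed_singleton.preimage
      (continuous_coe_right.comp continuous_subtype_val))).locallyCompactSpace
  exact (translationLattice H).isClosed_of_locallyCompactSpace

lemma mem_isometryStabilizer_translationLattice {H : Subgroup (IsomE n)} {w : OrthGrp n}
    (hw : inr w ∈ H) : w ∈ isometryStabilizer (translationLattice H : Set (En n)) := by
  have hmaps : ∀ w : OrthGrp n, inr w ∈ H → ∀ p ∈ translationLattice H,
      w p ∈ translationLattice H := fun w hw p hp => by
    show inl (rotAction n w (Multiplicative.ofAdd p)) ∈ H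
    rw [inl_aut, map_inv]
    exact H.mul_mem (H.mul_mem hw hp) (H.inv_mem hw)
  refine fun x => ⟨fun hx => ?_, hmaps w hw x⟩
  simpa using hmaps w⁻¹ (by rw [map_inv]; exact H.inv_mem hw) _ hx

lemma tPart_sub_apply_tPart_of_mul_mul_inv_eq {h h' k : IsomE n} (hconj : k * h * k⁻¹ = h') :
    tPart k - h'.right (tPart k) = tPart h' - k.right (tPart h) := by
  have hright : k.right * h.right * k.right⁻¹ = h'.right := congrArg right hconj
  have hleft : tPart h' =
      tPart k + k.right (tPart h) + (k.right * h.right * k.right⁻¹) (-tPart k) := by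
    rw [← hconj]; rfl
  rw [hright, map_neg] at hleft
  rw [hleft]
  abel

end Isometries

/-- **Lattice points near the minimum-norm solution.**  Let `H = T_H ⋊ H₀` be a locally
compact split subgroup of `Isom(𝔼ⁿ)`.  There is a constant `k₀ ≥ 0`, depending only on
`H`, such that: whenever `h = t^λ h₀` and `h' = t^{λ'} h₀'` are conjugate in `H`,
`u ∈ H₀` is the spherical part of some element of the coconjugation set `C_H(h,h')`, and
`η₀ ∈ span_ℝ(L_H)` is the minimum-norm real solution of `(Id − h₀')η = λ' − uλ`, then
some `η_u ∈ L_H` with `λ' − uλ = (Id − h₀')η_u` satisfies `‖η_u‖ ≤ ‖η₀‖ + k₀`. -/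
theorem lattice_solution_near_minimal_solution (n : ℕ) (H : Subgroup (IsomE n))
    (hsplit : Splits H) (hlc : LocallyCompactSpace ↥H) :
    ∃ k₀ : ℝ, 0 ≤ k₀ ∧
      ∀ h h' : IsomE n, h ∈ H → h' ∈ H →
      ∀ u : OrthGrp n, (∃ k ∈ H, k * h * k⁻¹ = h' ∧ k.right = u) →
      ∀ η₀ : En n, (η₀ : En n) ∈ Submodule.span ℝ (latticeLH H) →
        η₀ - h'.right η₀ = tPart h' - u (tPart h) →
        (∀ x ∈ Submodule.span ℝ (latticeLH H),
          x - h'.right x = tPart h' - u (tPart h) → ‖η₀‖ ≤ ‖x‖) →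
        ∃ ηu ∈ latticeLH H,
          tPart h' - u (tPart h) = ηu - h'.right ηu ∧ ‖ηu‖ ≤ ‖η₀‖ + k₀ := by
  have := hlc
  obtain ⟨k₀, hk₀, hnear⟩ := AddSubgroup.exists_forall_isometryStabilizer_fixed_norm_sub_le_of_isClosed
    (isClosed_translationLattice hsplit)
  refine ⟨k₀, hk₀, ?_⟩
  rintro h h' - hh' u ⟨k, hk, hconj, rfl⟩ η₀ hη₀ hη₀_sol -
  set η := tPart k
  have hη : η ∈ translationLattice H := (hsplit k hk).1
  have hη_sol := tPart_sub_apply_tPart_of_mul_mul_inv_eq hconj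
  have hfixed : h'.right (η - η₀) = η - η₀ := by
    rw [map_sub]
    exact (sub_eq_sub_iff_sub_eq_sub.1 (hη_sol.trans hη₀_sol.symm)).symm
  obtain ⟨q, hq, hq_fixed, hq_near⟩ :=
    hnear h'.right (mem_isometryStabilizer_translationLattice (hsplit h' hh').2) (η - η₀)
      (sub_mem (subset_span hη) hη₀) hfixed
  refine ⟨η - q, sub_mem hη hq, by rw [map_sub, hq_fixed, ← hη_sol]; abel, ?_⟩
  calc ‖η - q‖ = ‖η₀ + (η - η₀ - q)‖ := by congr 1; abel
    _ ≤ ‖η₀‖ + k₀ := (norm_add_le _ _).trans (by gcongr)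
end
end
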